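/- In a Cartesian k-differential category over a ℚ≥0-algebra k, for any map f and any n ∈ ℕ, if M^(n)[f] ≠ 0 then M^(n)[f] is a D-polynomial of D-degree exactly n, and if M^(n)[f] = 0 then its D-degree is 0. -/

import Mathlib

/-! A self-contained formalization of (Cartesian) `k`-differential categories. -/

universe u v w

/-- A Cartesian left `k`-linear category equipped with a differential combinator
satisfying the axioms **[CD.1]**–**[CD.7]**: a Cartesian `k`-differential category.
Composition `comp f g` is in diagrammatic order (`g ∘ f`). -/
structure CDC (k : Type w) [CommSemiring k] where
  Obj : Type u
  Hom : Obj → Obj → Type v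
  idm : ∀ A : Obj, Hom A A
  comp : ∀ {A B C : Obj}, Hom A B → Hom B C → Hom A C
  id_comp : ∀ {A B : Obj} (f : Hom A B), comp (idm A) f = f
  comp_id : ∀ {A B : Obj} (f : Hom A B), comp f (idm B) = f
  assoc : ∀ {A B C D : Obj} (f : Hom A B) (g : Hom B C) (h : Hom C D),
    comp (comp f g) h = comp f (comp g h)
  -- each homset is a `k`-module
  add : ∀ {A B : Obj}, Hom A B → Hom A B → Hom A B
  zero : ∀ {A B : Obj}, Hom A B
  smul : ∀ {A B : Obj}, k → Hom A B → Hom A B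
  add_assoc : ∀ {A B : Obj} (f g h : Hom A B), add (add f g) h = add f (add g h)
  add_comm : ∀ {A B : Obj} (f g : Hom A B), add f g = add g f
  zero_add : ∀ {A B : Obj} (f : Hom A B), add zero f = f
  one_smul : ∀ {A B : Obj} (f : Hom A B), smul 1 f = f
  mul_smul : ∀ {A B : Obj} (r s : k) (f : Hom A B), smul (r * s) f = smul r (smul s f)
  smul_add : ∀ {A B : Obj} (r : k) (f g : Hom A B), smul r (add f g) = add (smul r f) (smul r g)
  add_smul : ∀ {A B : Obj} (r s : k) (f : Hom A B), smul (r + s) f = add (smul r f) (smul s f)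
  zero_smul : ∀ {A B : Obj} (f : Hom A B), smul 0 f = zero
  smul_zero : ∀ {A B : Obj} (r : k), smul r (zero (A := A) (B := B)) = zero
  -- pre-composition is `k`-linear
  comp_add : ∀ {A B C : Obj} (x : Hom A B) (f g : Hom B C),
    comp x (add f g) = add (comp x f) (comp x g)
  comp_smul : ∀ {A B C : Obj} (x : Hom A B) (r : k) (f : Hom B C),
    comp x (smul r f) = smul r (comp x f)
  comp_zero : ∀ {A B C : Obj} (x : Hom A B), comp x (zero (A := B) (B := C)) = zero
  -- finite products
  prod : Obj → Obj → Obj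
  fst : ∀ {A B : Obj}, Hom (prod A B) A
  snd : ∀ {A B : Obj}, Hom (prod A B) B
  lift : ∀ {C A B : Obj}, Hom C A → Hom C B → Hom C (prod A B)
  lift_fst : ∀ {C A B : Obj} (f : Hom C A) (g : Hom C B), comp (lift f g) fst = f
  lift_snd : ∀ {C A B : Obj} (f : Hom C A) (g : Hom C B), comp (lift f g) snd = g
  lift_unique : ∀ {C A B : Obj} (h : Hom C (prod A B)), lift (comp h fst) (comp h snd) = h
  -- projections are `k`-linear
  fst_add : ∀ {C A B : Obj} (f g : Hom C (prod A B)),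
    comp (add f g) fst = add (comp f fst) (comp g fst)
  fst_smul : ∀ {C A B : Obj} (r : k) (f : Hom C (prod A B)),
    comp (smul r f) fst = smul r (comp f fst)
  snd_add : ∀ {C A B : Obj} (f g : Hom C (prod A B)),
    comp (add f g) snd = add (comp f snd) (comp g snd)
  snd_smul : ∀ {C A B : Obj} (r : k) (f : Hom C (prod A B)),
    comp (smul r f) snd = smul r (comp f snd)
  -- the differential combinator
  D : ∀ {A B : Obj}, Hom A B → Hom (prod A A) B
  CD1 : ∀ {A B : Obj} (r s : k) (f g : Hom A B),
    D (add (smul r f) (smul s g)) = add (smul r (D f)) (smul s (D g))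
  CD2 : ∀ {A B C : Obj} (f : Hom A B) (r s : k) (a b c : Hom C A),
    comp (lift a (add (smul r b) (smul s c))) (D f)
      = add (smul r (comp (lift a b) (D f))) (smul s (comp (lift a c) (D f)))
  CD3id : ∀ {A : Obj}, D (idm A) = snd
  CD3fst : ∀ {A B : Obj}, D (fst (A := A) (B := B)) = comp snd fst
  CD3snd : ∀ {A B : Obj}, D (snd (A := A) (B := B)) = comp snd snd
  CD4 : ∀ {A B C : Obj} (f : Hom A B) (g : Hom A C), D (lift f g) = lift (D f) (D g)
  CD5 : ∀ {A B C : Obj} (f : Hom A B) (g : Hom B C),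
    D (comp f g) = comp (lift (comp fst f) (D f)) (D g)
  CD6 : ∀ {A B C : Obj} (f : Hom A B) (a b : Hom C A),
    comp (lift (lift a zero) (lift zero b)) (D (D f)) = comp (lift a b) (D f)
  CD7 : ∀ {A B C : Obj} (f : Hom A B) (a b c d : Hom C A),
    comp (lift (lift a b) (lift c d)) (D (D f))
      = comp (lift (lift a c) (lift b d)) (D (D f))

namespace CDC

variable {k : Type w} [CommSemiring k]

/-- `pow A n` is the product `A × A^{×ⁿ}` (so `pow A 0 = A`), the domain of the
`n`-th derivative `∂⁽ⁿ⁾[f] : A × A^{×ⁿ} → B`. -/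
def pow (X : CDC k) (A : X.Obj) : ℕ → X.Obj
  | 0 => A
  | n + 1 => X.prod (X.pow A n) A

/-- `pad A n : A → A × A^{×ⁿ}` is `a ↦ (a, 0, …, 0)`. -/
def pad (X : CDC k) (A : X.Obj) : (n : ℕ) → X.Hom A (X.pow A n)
  | 0 => X.idm A
  | n + 1 => X.lift (X.pad A n) X.zero

/-- The `n`-th derivative `∂⁽ⁿ⁾[f] : A × A^{×ⁿ} → B`, defined inductively by
`∂⁽⁰⁾[f] = f` and `∂⁽ⁿ⁺¹⁾[f]` is the partial derivative of `∂⁽ⁿ⁾[f]` in its first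
argument (obtained by padding the direction vector with zeroes). -/
def pd (X : CDC k) {A B : X.Obj} : (n : ℕ) → X.Hom A B → X.Hom (X.pow A n) B
  | 0, f => f
  | n + 1, f =>
      X.comp (X.lift X.fst (X.comp X.snd (X.pad A n))) (X.D (X.pd n f))

/-- `diag A n : A → A × A^{×ⁿ}` is `x ↦ (0, x, …, x)`. -/
def diag (X : CDC k) (A : X.Obj) : (n : ℕ) → X.Hom A (X.pow A n)
  | 0 => X.zero
  | n + 1 => X.lift (X.diag A n) (X.idm A)

/-- A map `p` is a `D`-polynomial if `∂⁽ⁿ⁺¹⁾[p] = 0` for some `n`. -/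
def IsPoly (X : CDC k) {A B : X.Obj} (p : X.Hom A B) : Prop :=
  ∃ n : ℕ, X.pd (n + 1) p = X.zero

/-- The `D`-degree of `p`: the least `n` with `∂⁽ⁿ⁺¹⁾[p] = 0`. -/
noncomputable def deg (X : CDC k) {A B : X.Obj} (p : X.Hom A B) : ℕ :=
  sInf {n : ℕ | X.pd (n + 1) p = X.zero}

end CDC

/-- A Cartesian `k`-differential category over a commutative `ℚ≥0`-algebra `k`,
i.e. where every `n! ∈ k` is invertible. -/
structure QCDC (k : Type w) [CommSemiring k] extends CDC k where
  invFact : ℕ → k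
  invFact_spec : ∀ n : ℕ, (Nat.factorial n : k) * invFact n = 1

namespace QCDC

variable {k : Type w} [CommSemiring k]

/-- The `n`-th Taylor differential monomial `M⁽ⁿ⁾[f](x) = (1/n!) · ∂⁽ⁿ⁾[f](0, x, …, x)`. -/
def M (X : QCDC k) {A B : X.Obj} (n : ℕ) (f : X.Hom A B) : X.Hom A B :=
  X.smul (X.invFact n) (X.comp (X.toCDC.diag A n) (X.toCDC.pd n f))

/-- The `n`-th Taylor differential polynomial `T⁽ⁿ⁾[f] = Σ_{j=0}^n M⁽ʲ⁾[f]`. -/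
def T (X : QCDC k) {A B : X.Obj} : ℕ → X.Hom A B → X.Hom A B
  | 0, f => X.M 0 f
  | n + 1, f => X.add (X.T n f) (X.M (n + 1) f)

/-- The `D`-distance: `2^(-n)` for the least `n` where the Taylor monomials of `f` and `g`
disagree, and `0` if they all agree. -/
noncomputable def dD (X : QCDC k) {A B : X.Obj} (f g : X.Hom A B) : ℝ :=
  open Classical in
  if ∀ n : ℕ, X.M n f = X.M n g then 0
  else (2 : ℝ) ^ (-((sInf {n : ℕ | ¬ X.M n f = X.M n g} : ℕ) : ℤ))

/-- A Cartesian `k`-differential category is **Taylor** if maps are completely determined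
by their Taylor differential monomials. -/
def Taylor (X : QCDC k) : Prop :=
  ∀ (A B : X.Obj) (f g : X.Hom A B), (∀ n : ℕ, X.M n f = X.M n g) → f = g

end QCDC

/-! ### Auxiliary development -/

attribute [reducible] CDC.pow

namespace CDC

variable {k : Type w} [CommSemiring k]

section Basics
variable (X : CDC k)

theorem add_zero' {A B : X.Obj} (f : X.Hom A B) : X.add f X.zero = f := by
  rw [X.add_comm, X.zero_add]

theorem comp_lift {C A B E : X.Obj} (x : X.Hom C A) (f : X.Hom A B) (g : X.Hom A E) :
    X.comp x (X.lift f g) = X.lift (X.comp x f) (X.comp x g) := by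
  rw [← X.lift_unique (X.comp x (X.lift f g)), X.assoc, X.lift_fst, X.assoc, X.lift_snd]

theorem lift_fst_assoc {C A B E : X.Obj} (f : X.Hom C A) (g : X.Hom C B) (h : X.Hom A E) :
    X.comp (X.lift f g) (X.comp X.fst h) = X.comp f h := by
  rw [← X.assoc, X.lift_fst]

theorem lift_snd_assoc {C A B E : X.Obj} (f : X.Hom C A) (g : X.Hom C B) (h : X.Hom B E) :
    X.comp (X.lift f g) (X.comp X.snd h) = X.comp g h := by
  rw [← X.assoc, X.lift_snd]

theorem zero_comp_fst {C A B : X.Obj} :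
    X.comp (X.zero : X.Hom C (X.prod A B)) X.fst = X.zero := by
  have h := X.fst_smul (0 : k) (X.zero : X.Hom C (X.prod A B))
  rwa [X.zero_smul, X.zero_smul] at h

theorem zero_comp_snd {C A B : X.Obj} :
    X.comp (X.zero : X.Hom C (X.prod A B)) X.snd = X.zero := by
  have h := X.snd_smul (0 : k) (X.zero : X.Hom C (X.prod A B))
  rwa [X.zero_smul, X.zero_smul] at h

theorem zero_lift {C A B : X.Obj} :
    X.lift (X.zero : X.Hom C A) (X.zero : X.Hom C B) = X.zero := by
  rw [← X.lift_unique (X.zero : X.Hom C (X.prod A B)), X.zero_comp_fst, X.zero_comp_snd]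

theorem add_lift {C A B : X.Obj} (a c : X.Hom C A) (b d : X.Hom C B) :
    X.add (X.lift a b) (X.lift c d) = X.lift (X.add a c) (X.add b d) := by
  rw [← X.lift_unique (X.add (X.lift a b) (X.lift c d)), X.fst_add, X.snd_add,
    X.lift_fst, X.lift_fst, X.lift_snd, X.lift_snd]

theorem D_add {A B : X.Obj} (f g : X.Hom A B) :
    X.D (X.add f g) = X.add (X.D f) (X.D g) := by
  have h := X.CD1 (1:k) (1:k) f g
  rwa [X.one_smul, X.one_smul, X.one_smul, X.one_smul] at h

theorem D_smul {A B : X.Obj} (r : k) (f : X.Hom A B) :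
    X.D (X.smul r f) = X.smul r (X.D f) := by
  have h := X.CD1 r (0:k) f f
  rwa [X.zero_smul, X.zero_smul, X.add_zero', X.add_zero'] at h

theorem D_zero {A B : X.Obj} : X.D (X.zero : X.Hom A B) = X.zero := by
  have h := X.D_smul (0:k) (X.zero : X.Hom A B)
  rwa [X.zero_smul, X.zero_smul] at h

theorem dir_zero {C A B : X.Obj} (f : X.Hom A B) (a : X.Hom C A) :
    X.comp (X.lift a X.zero) (X.D f) = X.zero := by
  have h := X.CD2 f (0:k) (0:k) a X.zero X.zero
  simp only [CDC.zero_smul, CDC.zero_add] at h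
  exact h

theorem dir_add {C A B : X.Obj} (f : X.Hom A B) (a b c : X.Hom C A) :
    X.comp (X.lift a (X.add b c)) (X.D f)
      = X.add (X.comp (X.lift a b) (X.D f)) (X.comp (X.lift a c) (X.D f)) := by
  have h := X.CD2 f (1:k) (1:k) a b c
  rwa [X.one_smul, X.one_smul, X.one_smul, X.one_smul] at h

end Basics

end CDC

namespace CDC

variable {k : Type w} [CommSemiring k]

section Defs
variable (X : CDC k)

/-- Linear maps: the derivative is the map applied to the direction. -/
def IsLin {A B : X.Obj} (u : X.Hom A B) : Prop := X.D u = X.comp X.snd u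

theorem lin_eq {A B : X.Obj} {u : X.Hom A B} (h : X.IsLin u) :
    X.D u = X.comp X.snd u := h

/-- swap of the two outermost coordinates of `pow A (j+2)`. -/
def sigma (A : X.Obj) (j : ℕ) : X.Hom (X.pow A (j+2)) (X.pow A (j+2)) :=
  X.lift (X.lift (X.comp X.fst X.fst) X.snd) (X.comp X.fst X.snd)

/-- whiskering an endomap by an extra product coordinate. -/
def extm (A : X.Obj) (w : ℕ) (σ : X.Hom (X.pow A w) (X.pow A w)) :
    X.Hom (X.pow A (w+1)) (X.pow A (w+1)) :=
  X.lift (X.comp X.fst σ) X.snd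

/-- the transposition of slots `(j+1, j+2)` in `pow A (j+2+r)`. -/
def tau (A : X.Obj) (j : ℕ) : (r : ℕ) → X.Hom (X.pow A (j+2+r)) (X.pow A (j+2+r))
  | 0 => X.sigma A j
  | r+1 => X.extm A (j+2+r) (tau A j r)

/-- `(a,b₁,…,b_kk) ↦ (0, a^{m-kk}, b₁, …, b_kk)`. -/
def V (A : X.Obj) : (m kk : ℕ) → X.Hom (X.pow A kk) (X.pow A m)
  | m, 0 => X.diag A m
  | 0, _+1 => X.zero
  | m+1, kk+1 => X.lift (X.comp X.fst (V A m kk)) X.snd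

/-- projection on the innermost (0-th) coordinate. -/
def proj0 (A : X.Obj) : (kk : ℕ) → X.Hom (X.pow A kk) A
  | 0 => X.idm A
  | kk+1 => X.comp X.fst (proj0 A kk)

/-- elementary insertion `c ↦ (0,…,0,c,0,…,0)` (`c` in slot `i`, `1 ≤ i ≤ m`). -/
def En (A : X.Obj) : (m i : ℕ) → X.Hom A (X.pow A m)
  | 0, _ => X.zero
  | m+1, i => if i = m+1 then X.lift X.zero (X.idm A) else X.lift (En A m i) X.zero

/-- the `V`-point with the innermost `a` moved so that `jj` of the `b`'s lie after it. -/
def VI (A : X.Obj) : (jj m kk : ℕ) → X.Hom (X.pow A kk) (X.pow A m)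
  | 0, m+1, kk => X.lift (X.V A m kk) (X.proj0 A kk)
  | jj+1, m+1, kk+1 => X.lift (X.comp X.fst (VI A jj m kk)) X.snd
  | _, _, _ => X.zero

variable {X}
variable {A : X.Obj}

theorem V_zero (m : ℕ) : X.V A m 0 = X.diag A m := by cases m <;> rfl

theorem V_succ (m kk : ℕ) :
    X.V A (m+1) (kk+1) = X.lift (X.comp X.fst (X.V A m kk)) X.snd := rfl

theorem VI_zero (m kk : ℕ) :
    X.VI A 0 (m+1) kk = X.lift (X.V A m kk) (X.proj0 A kk) := rfl

theorem VI_succ (jj m kk : ℕ) :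
    X.VI A (jj+1) (m+1) (kk+1) = X.lift (X.comp X.fst (X.VI A jj m kk)) X.snd := rfl

theorem En_last (m : ℕ) : X.En A (m+1) (m+1) = X.lift X.zero (X.idm A) := by
  rw [En, if_pos rfl]

theorem En_lt {m i : ℕ} (h : i ≠ m+1) :
    X.En A (m+1) i = X.lift (X.En A m i) X.zero := by
  rw [En, if_neg h]

theorem pd_succ {B : X.Obj} (n : ℕ) (f : X.Hom A B) :
    X.pd (n+1) f
      = X.comp (X.lift X.fst (X.comp X.snd (X.pad A n))) (X.D (X.pd n f)) := rfl

theorem pad_succ (n : ℕ) : X.pad A (n+1) = X.lift (X.pad A n) X.zero := rfl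

theorem diag_succ (n : ℕ) : X.diag A (n+1) = X.lift (X.diag A n) (X.idm A) := rfl

end Defs

section Lin
variable {X : CDC k} {A : X.Obj}

theorem lin_id : X.IsLin (X.idm A) := by
  rw [IsLin, X.CD3id, X.comp_id]

theorem lin_fst {B : X.Obj} : X.IsLin (X.fst : X.Hom (X.prod A B) A) := X.CD3fst

theorem lin_snd {B : X.Obj} : X.IsLin (X.snd : X.Hom (X.prod A B) B) := X.CD3snd

theorem lin_zero {B : X.Obj} : X.IsLin (X.zero : X.Hom A B) := by
  rw [IsLin, X.D_zero, X.comp_zero]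

theorem lin_lift {C A B : X.Obj} {f : X.Hom C A} {g : X.Hom C B}
    (hf : X.IsLin f) (hg : X.IsLin g) : X.IsLin (X.lift f g) := by
  rw [IsLin, X.CD4, X.lin_eq hf, X.lin_eq hg, ← X.comp_lift]

theorem lin_comp {A B C : X.Obj} {f : X.Hom A B} {g : X.Hom B C}
    (hf : X.IsLin f) (hg : X.IsLin g) : X.IsLin (X.comp f g) := by
  rw [IsLin, X.CD5, X.lin_eq hf, X.lin_eq hg, ← X.assoc, ← X.assoc, X.lift_snd]

theorem lin_pad : ∀ n, X.IsLin (X.pad A n)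
  | 0 => lin_id
  | n+1 => lin_lift (lin_pad n) lin_zero

theorem lin_diag : ∀ n, X.IsLin (X.diag A n)
  | 0 => lin_zero
  | n+1 => lin_lift (lin_diag n) lin_id

theorem lin_V : ∀ kk m, X.IsLin (X.V A m kk)
  | 0, m => by rw [V_zero]; exact lin_diag m
  | _+1, 0 => lin_zero
  | kk+1, m+1 => lin_lift (lin_comp lin_fst (lin_V kk m)) lin_snd

theorem lin_sigma (j : ℕ) : X.IsLin (X.sigma A j) :=
  lin_lift (lin_lift (lin_comp lin_fst lin_fst) lin_snd) (lin_comp lin_fst lin_snd)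

theorem lin_extm {w : ℕ} {σ : X.Hom (X.pow A w) (X.pow A w)}
    (h : X.IsLin σ) : X.IsLin (X.extm A w σ) :=
  lin_lift (lin_comp lin_fst h) lin_snd

theorem lin_tau (j : ℕ) : ∀ r, X.IsLin (X.tau A j r)
  | 0 => lin_sigma j
  | r+1 => lin_extm (lin_tau j r)

end Lin

end CDC

namespace CDC

variable {k : Type w} [CommSemiring k]
variable {X : CDC k} {A : X.Obj}

theorem lin_hmap (n : ℕ) :
    X.IsLin (X.lift (X.fst (A := X.pow A n) (B := A)) (X.comp X.snd (X.pad A n))) :=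
  lin_lift lin_fst (lin_comp lin_snd (lin_pad n))

theorem D_comp_lin {A B C : X.Obj} {u : X.Hom A B} (hu : X.IsLin u) (g : X.Hom B C) :
    X.D (X.comp u g)
      = X.comp (X.lift (X.comp X.fst u) (X.comp X.snd u)) (X.D g) := by
  rw [X.CD5, X.lin_eq hu]

theorem zc_pad {C : X.Obj} : ∀ n, X.comp (X.zero : X.Hom C A) (X.pad A n) = X.zero
  | 0 => X.comp_id X.zero
  | n+1 => by
    rw [pad_succ, X.comp_lift, zc_pad n, X.comp_zero, X.zero_lift]

theorem comp_comp_lift {C A B E F : X.Obj} (x : X.Hom C A) (f : X.Hom A B)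
    (g : X.Hom A E) (h : X.Hom (X.prod B E) F) :
    X.comp x (X.comp (X.lift f g) h)
      = X.comp (X.lift (X.comp x f) (X.comp x g)) h := by
  rw [← X.assoc, X.comp_lift]

theorem step_lin {B : X.Obj} {w w' : ℕ} (u : X.Hom (X.pow A w') (X.pow A w))
    (g : X.Hom (X.pow A w) B) (hu : X.IsLin u) :
    X.comp (X.lift X.fst (X.comp X.snd (X.pad A w'))) (X.D (X.comp u g))
      = X.comp (X.lift (X.comp X.fst u) (X.comp X.snd (X.comp (X.pad A w') u)))
          (X.D g) := by
  rw [D_comp_lin hu, ← X.assoc, X.comp_lift, X.lift_fst_assoc, X.lift_snd_assoc, X.assoc]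

theorem dlast {B C : X.Obj} (j : ℕ) (f : X.Hom A B)
    (p : X.Hom C (X.pow A j)) (b c : X.Hom C A) :
    X.comp (X.lift (X.lift p b) (X.lift X.zero c)) (X.D (X.pd (j+1) f))
      = X.comp (X.lift p c) (X.pd (j+1) f) := by
  rw [pd_succ, D_comp_lin (lin_hmap j)]
  simp only [comp_lift, comp_comp_lift, lift_fst, lift_snd, lift_fst_assoc,
    lift_snd_assoc, comp_zero, zc_pad, zero_lift, comp_id, id_comp, assoc]
  rw [X.CD7]
  have hsplit : X.lift (X.comp b (X.pad A j)) (X.comp c (X.pad A j))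
      = X.add (X.lift (X.comp b (X.pad A j)) X.zero)
          (X.lift X.zero (X.comp c (X.pad A j))) := by
    rw [X.add_lift, X.add_zero', X.zero_add]
  rw [hsplit, X.dir_add, X.CD7, X.zero_lift, X.dir_zero, X.zero_add, X.CD6]

theorem sigma_pd {B : X.Obj} (j : ℕ) (f : X.Hom A B) :
    X.comp (X.sigma A j) (X.pd (j+2) f) = X.pd (j+2) f := by
  conv_rhs => rw [pd_succ, pd_succ, D_comp_lin (lin_hmap j)]
  conv_lhs => rw [pd_succ, pd_succ, D_comp_lin (lin_hmap j)]
  simp only [sigma, pad_succ, comp_lift, comp_comp_lift, lift_fst, lift_snd,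
    lift_fst_assoc, lift_snd_assoc, comp_zero, zc_pad, zero_lift, comp_id,
    id_comp, assoc]
  exact X.CD7 (X.pd j f) _ _ _ _

theorem perm {Z B C : X.Obj} {τ : X.Hom Z Z} (hl : X.IsLin τ) {g : X.Hom Z B}
    (hg : X.comp τ g = g) (P d : X.Hom C Z) :
    X.comp (X.lift P d) (X.D g)
      = X.comp (X.lift (X.comp P τ) (X.comp d τ)) (X.D g) := by
  conv_lhs => rw [← hg, D_comp_lin hl]
  rw [← X.assoc, X.comp_lift, X.lift_fst_assoc, X.lift_snd_assoc]

theorem ext_step {B : X.Obj} {w : ℕ} {σ : X.Hom (X.pow A w) (X.pow A w)}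
    (hl : X.IsLin σ) (hp : X.comp (X.pad A w) σ = X.pad A w)
    {g : X.Hom (X.pow A w) B} (hg : X.comp σ g = g) :
    X.comp (X.extm A w σ)
        (X.comp (X.lift X.fst (X.comp X.snd (X.pad A w))) (X.D g))
      = X.comp (X.lift X.fst (X.comp X.snd (X.pad A w))) (X.D g) := by
  conv_rhs => rw [← hg, D_comp_lin hl]
  rw [extm, ← X.assoc, X.comp_lift, X.lift_fst, X.lift_snd_assoc,
    X.comp_comp_lift, X.lift_fst_assoc, X.lift_snd_assoc, X.assoc, hp]

theorem pad_sigma (j : ℕ) :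
    X.comp (X.pad A (j+2)) (X.sigma A j) = X.pad A (j+2) := by
  simp only [sigma, pad_succ, comp_lift, comp_comp_lift, lift_fst, lift_snd,
    lift_fst_assoc, lift_snd_assoc, comp_zero, zero_comp_fst, zero_comp_snd,
    zero_lift, comp_id, id_comp, assoc]

theorem pad_tau (j : ℕ) : ∀ r, X.comp (X.pad A (j+2+r)) (X.tau A j r) = X.pad A (j+2+r)
  | 0 => pad_sigma j
  | r+1 => by
    show X.comp (X.pad A ((j+2+r)+1)) (X.extm A (j+2+r) (X.tau A j r)) = _
    rw [pad_succ, extm, X.comp_lift, X.lift_fst_assoc, X.lift_snd, pad_tau j r]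
    rfl

theorem tau_pd {B : X.Obj} (j : ℕ) (f : X.Hom A B) :
    ∀ r, X.comp (X.tau A j r) (X.pd (j+2+r) f) = X.pd (j+2+r) f
  | 0 => sigma_pd j f
  | r+1 =>
    ext_step (lin_tau j r) (pad_tau j r) (tau_pd j f r)

theorem proj0_succ (kk : ℕ) : X.proj0 A (kk+1) = X.comp X.fst (X.proj0 A kk) := rfl

theorem lift_add_zero {C B : X.Obj} (a b : X.Hom C B) :
    X.lift (X.add a b) (X.zero : X.Hom C A)
      = X.add (X.lift a X.zero) (X.lift b X.zero) := by
  rw [X.add_lift, X.zero_add]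

theorem diag_tau (j : ℕ) : ∀ r, X.comp (X.diag A (j+2+r)) (X.tau A j r) = X.diag A (j+2+r)
  | 0 => by
    show X.comp (X.diag A (j+2)) (X.sigma A j) = X.diag A (j+2)
    simp only [sigma, diag_succ, comp_lift, comp_comp_lift, lift_fst, lift_snd,
      lift_fst_assoc, lift_snd_assoc, comp_zero, comp_id, id_comp, assoc]
  | r+1 => by
    show X.comp (X.diag A ((j+2+r)+1)) (X.extm A (j+2+r) (X.tau A j r)) = _
    rw [diag_succ, extm, X.comp_lift, X.lift_fst_assoc, X.lift_snd, diag_tau j r]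
    rfl

theorem V_tau : ∀ kk r j, kk ≤ r → X.comp (X.V A (j+2+r) kk) (X.tau A j r) = X.V A (j+2+r) kk
  | 0, r, j, _ => by rw [V_zero]; exact diag_tau j r
  | kk+1, 0, _, h => absurd h (by omega)
  | kk+1, r+1, j, h => by
    show X.comp (X.V A ((j+2+r)+1) (kk+1)) (X.extm A (j+2+r) (X.tau A j r)) = _
    rw [V_succ, extm, X.comp_lift, X.lift_fst_assoc, X.lift_snd, X.assoc,
      V_tau kk r j (by omega)]
    exact (V_succ (j+2+r) kk).symm

theorem En_tau : ∀ r j, X.comp (X.En A (j+2+r) (j+1)) (X.tau A j r) = X.En A (j+2+r) (j+2)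
  | 0, j => by
    show X.comp (X.En A (j+2) (j+1)) (X.sigma A j) = X.En A (j+2) (j+2)
    rw [En_lt (by omega : j+1 ≠ (j+1)+1), En_last j, En_last (j+1)]
    simp only [sigma, comp_lift, comp_comp_lift, lift_fst, lift_snd,
      lift_fst_assoc, lift_snd_assoc, comp_zero, comp_id, id_comp, assoc,
      zero_comp_fst, zero_comp_snd, zero_lift]
  | r+1, j => by
    show X.comp (X.En A ((j+2+r)+1) (j+1)) (X.extm A (j+2+r) (X.tau A j r)) = _
    rw [En_lt (by omega : j+1 ≠ (j+2+r)+1), extm, X.comp_lift, X.lift_fst_assoc,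
      X.lift_snd, En_tau r j, ← En_lt (by omega : j+2 ≠ (j+2+r)+1)]
    rfl

theorem VI_eq_V : ∀ kk q, X.VI A kk (q+1+kk) kk = X.V A (q+1+kk) kk
  | 0, q => by
    rw [VI_zero, V_zero, V_zero]
    show X.lift (X.diag A q) (X.idm A) = _
    rw [← diag_succ]
  | kk+1, q => by
    show X.VI A (kk+1) ((q+1+kk)+1) (kk+1) = X.V A ((q+1+kk)+1) (kk+1)
    rw [VI_succ, VI_eq_V kk q, ← V_succ]

theorem VI_tau : ∀ r j kk, r < kk →
    X.comp (X.VI A (r+1) (j+2+r) kk) (X.tau A j r) = X.VI A r (j+2+r) kk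
  | 0, j, kk+1, _ => by
    show X.comp (X.VI A 1 (j+2) (kk+1)) (X.sigma A j) = _
    rw [VI_succ, VI_zero, VI_zero, V_succ, proj0_succ]
    simp only [sigma, comp_lift, comp_comp_lift, lift_fst, lift_snd,
      lift_fst_assoc, lift_snd_assoc, comp_zero, comp_id, id_comp, assoc]
  | r+1, j, kk+1, h => by
    show X.comp (X.VI A (r+2) ((j+2+r)+1) (kk+1)) (X.extm A (j+2+r) (X.tau A j r)) = _
    rw [VI_succ, extm, X.comp_lift, X.lift_fst_assoc, X.lift_snd, X.assoc,
      VI_tau r j kk (by omega), ← VI_succ]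
    rfl
  | 0, _, 0, h => absurd h (by omega)
  | r+1, _, 0, h => absurd h (by omega)

theorem pad_V_one : ∀ q, X.comp (X.pad A q) (X.V A (q+1) q) = X.En A (q+1) 1
  | 0 => by
    show X.comp (X.idm A) (X.V A 1 0) = _
    rw [X.id_comp, V_zero, diag_succ, En_last 0]
    rfl
  | q+1 => by
    rw [pad_succ, V_succ, X.comp_lift, X.lift_fst_assoc, X.lift_snd, pad_V_one q,
      ← En_lt (by omega : 1 ≠ (q+1)+1)]

theorem pad_V_split : ∀ q m, q < m →
    X.comp (X.pad A q) (X.V A m q)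
      = X.add (X.comp (X.pad A (q+1)) (X.V A m (q+1))) (X.En A m (m-q))
  | 0, m+1, _ => by
    rw [show X.pad A 0 = X.idm A from rfl, X.id_comp, V_zero]
    rw [show m+1-0 = m+1 from rfl, En_last m]
    rw [pad_succ, V_succ, X.comp_lift, X.lift_fst_assoc, X.lift_snd, V_zero,
      show X.pad A 0 = X.idm A from rfl, X.id_comp, X.add_lift, X.add_zero',
      X.zero_add, ← diag_succ]
  | q+1, m+1, h => by
    have h1 : X.comp (X.pad A (q+1+1)) (X.V A (m+1) (q+1+1))
        = X.lift (X.comp (X.pad A (q+1)) (X.V A m (q+1))) X.zero := by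
      rw [pad_succ (q+1), V_succ m (q+1), X.comp_lift, X.lift_fst_assoc, X.lift_snd]
    rw [pad_succ q, V_succ m q, X.comp_lift, X.lift_fst_assoc, X.lift_snd,
      pad_V_split q m (by omega), lift_add_zero, ← h1,
      show m+1-(q+1) = m-q by omega, En_lt (by omega : m-q ≠ m+1)]

theorem pad_V_diag : ∀ j, X.comp (X.pad A j) (X.V A j j) = X.zero
  | 0 => by rw [V_zero]; exact X.comp_zero _
  | j+1 => by
    rw [pad_succ, V_succ, X.comp_lift, X.lift_fst_assoc, X.lift_snd,
      pad_V_diag j, X.zero_lift]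

theorem diag_V_diag : ∀ j, X.comp (X.diag A j) (X.V A j j) = X.diag A j
  | 0 => by rw [V_zero]; exact X.comp_zero _
  | j+1 => by
    rw [V_succ, diag_succ, X.comp_lift, X.lift_fst_assoc, X.lift_snd,
      diag_V_diag j]

theorem FC {B : X.Obj} (f : X.Hom A B) : ∀ r j kk, r < kk →
    X.comp (X.lift
        (X.comp (X.fst (A := X.pow A kk) (B := A)) (X.VI A (r+1) (j+2+r) kk))
        (X.comp X.snd (X.En A (j+2+r) (j+1)))) (X.D (X.pd (j+2+r) f))
      = X.comp (X.lift (X.comp X.fst (X.VI A 0 (j+2+r) kk))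
          (X.comp X.snd (X.En A (j+2+r) (j+2+r)))) (X.D (X.pd (j+2+r) f))
  | 0, j, kk, h => by
    rw [perm (lin_tau j 0) (tau_pd j f 0) _ _, X.assoc, X.assoc,
      VI_tau 0 j kk h, En_tau 0 j]
  | r+1, j, kk, h => by
    rw [perm (lin_tau j (r+1)) (tau_pd j f (r+1)) _ _, X.assoc, X.assoc,
      VI_tau (r+1) j kk h, En_tau (r+1) j]
    have ih := FC f r (j+1) kk (by omega)
    rw [show (j+1)+2+r = j+2+(r+1) by omega] at ih
    exact ih

theorem SL {B : X.Obj} (f : X.Hom A B) : ∀ n kk,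
    X.comp (X.lift (X.comp (X.fst (A := X.pow A kk) (B := A)) (X.V A (n+kk+1) kk))
        (X.comp X.snd (X.En A (n+kk+1) (n+1)))) (X.D (X.pd (n+kk+1) f))
      = X.comp (X.V A (n+kk+1) (kk+1)) (X.pd (n+kk+1) f)
  | n, 0 => by
    rw [show n+0+1 = n+1 by omega, V_zero, diag_succ, En_last n]
    simp only [comp_lift, comp_id, comp_zero]
    rw [dlast, V_succ, V_zero]
  | n, kk'+1 => by
    rw [show n+(kk'+1)+1 = n+2+kk' by omega]
    have hVI := VI_eq_V (X := X) (A := A) (kk'+1) n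
    rw [show n+1+(kk'+1) = n+2+kk' by omega] at hVI
    rw [← hVI, FC f kk' n (kk'+1) (by omega),
      show n+2+kk' = (n+1+kk')+1 by omega, VI_zero, En_last]
    simp only [comp_lift, comp_id, comp_zero]
    rw [dlast, ← V_succ]

theorem ACF {B : X.Obj} (f : X.Hom A B) : ∀ d i n kk, i + d = n+1 → 1 ≤ i →
    X.comp (X.lift (X.comp (X.fst (A := X.pow A kk) (B := A)) (X.V A (n+kk+1) kk))
        (X.comp X.snd (X.En A (n+kk+1) i))) (X.D (X.pd (n+kk+1) f))
      = X.comp (X.V A (n+kk+1) (kk+1)) (X.pd (n+kk+1) f)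
  | 0, i, n, kk, hd, hi => by
    obtain rfl : i = n+1 := by omega
    exact SL f n kk
  | d+1, i, n, kk, hd, hi => by
    obtain ⟨j, rfl⟩ : ∃ j, i = j+1 := ⟨i-1, by omega⟩
    obtain ⟨r, hr⟩ : ∃ r, n+kk+1 = j+2+r := ⟨n+kk-j-1, by omega⟩
    rw [hr, perm (lin_tau j r) (tau_pd j f r) _ _, X.assoc, X.assoc,
      V_tau kk r j (by omega), En_tau r j, ← hr]
    exact ACF f d (j+2) n kk (by omega) (by omega)

theorem GC {B : X.Obj} (f : X.Hom A B) : ∀ r n kk, r ≤ n →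
    X.comp (X.lift (X.comp (X.fst (A := X.pow A kk) (B := A)) (X.V A (n+kk+1) kk))
        (X.comp X.snd (X.comp (X.pad A (n+kk+1-(r+1))) (X.V A (n+kk+1) (n+kk+1-(r+1))))))
        (X.D (X.pd (n+kk+1) f))
      = X.smul ((r+1 : ℕ) : k) (X.comp (X.V A (n+kk+1) (kk+1)) (X.pd (n+kk+1) f))
  | 0, n, kk, h => by
    rw [show n+kk+1-(0+1) = n+kk by omega, pad_V_one (n+kk),
      show ((0+1:ℕ):k) = 1 by norm_num, X.one_smul]
    exact ACF f n 1 n kk (by omega) (by omega)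
  | r+1, n, kk, h => by
    rw [show n+kk+1-(r+1+1) = n+kk-r-1 by omega,
      pad_V_split (n+kk-r-1) (n+kk+1) (by omega),
      show n+kk-r-1+1 = n+kk+1-(r+1) by omega,
      show n+kk+1-(n+kk-r-1) = r+2 by omega,
      X.comp_add, X.dir_add, GC f r n kk (by omega),
      ACF f (n-r-1) (r+2) n kk (by omega) (by omega),
      show ((r+1+1:ℕ):k) = ((r+1:ℕ):k) + 1 by push_cast; ring,
      X.add_smul, X.one_smul]

end CDC

namespace CDC
variable {k : Type w} [CommSemiring k]
variable {X : CDC k} {A : X.Obj}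

theorem pd_zero_add {B : X.Obj} {p : X.Hom A B} :
    ∀ (d : ℕ) {q}, X.pd q p = X.zero → X.pd (q+d) p = X.zero
  | 0, _, h => h
  | d+1, q, h => by
    rw [show q+(d+1) = (q+d)+1 from rfl, pd_succ, pd_zero_add d h, X.D_zero, X.comp_zero]

end CDC

namespace QCDC
variable {k : Type w} [CommSemiring k]

theorem invFact_zero (X : QCDC k) : X.invFact 0 = 1 := by
  have h := X.invFact_spec 0
  simpa [Nat.factorial_zero] using h

theorem invFact_succ_mul (X : QCDC k) (n : ℕ) :
    X.invFact (n+1) * ((n+1 : ℕ) : k) = X.invFact n := by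
  have h1 := X.invFact_spec n
  have h2 := X.invFact_spec (n+1)
  calc X.invFact (n+1) * ((n+1 : ℕ) : k)
      = (X.invFact (n+1) * ((n+1 : ℕ) : k)) * (((n.factorial : ℕ) : k) * X.invFact n) := by
        rw [h1, mul_one]
    _ = ((((n+1).factorial : ℕ) : k) * X.invFact (n+1)) * X.invFact n := by
        rw [Nat.factorial_succ]; push_cast; ring
    _ = X.invFact n := by rw [h2, one_mul]

theorem taylor_main (X : QCDC k) {A B : X.toCDC.Obj} (f : X.Hom A B) : ∀ kk n,
    X.toCDC.pd kk (X.M (n+kk) f)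
      = X.smul (X.invFact n)
          (X.toCDC.comp (X.toCDC.V A (n+kk) kk) (X.toCDC.pd (n+kk) f))
  | 0, n => by rw [CDC.V_zero]; rfl
  | kk+1, n => by
    have ih := taylor_main X f kk (n+1)
    rw [show n+1+kk = n+(kk+1) by omega] at ih
    have gc := CDC.GC (X := X.toCDC) (A := A) f n n kk le_rfl
    rw [show n+kk+1-(n+1) = kk by omega] at gc
    rw [show n+(kk+1) = n+kk+1 by omega]
    rw [show n+(kk+1) = n+kk+1 by omega] at ih
    rw [CDC.pd_succ, ih, X.toCDC.D_smul, X.toCDC.comp_smul,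
      CDC.step_lin _ _ (CDC.lin_V kk (n+kk+1)), gc,
      ← X.toCDC.mul_smul, X.invFact_succ_mul]

end QCDC
/-- `M⁽ⁿ⁾[f]` is a `D`-polynomial, with `deg (M⁽ⁿ⁾[f]) = n` if
`M⁽ⁿ⁾[f] ≠ 0` and `deg (M⁽ⁿ⁾[f]) = 0` if `M⁽ⁿ⁾[f] = 0`. -/
theorem M_isPoly_deg {k : Type w} [CommSemiring k] (X : QCDC k)
    {A B : X.Obj} (f : X.Hom A B) (n : ℕ) :
    X.toCDC.IsPoly (X.M n f) ∧
      (X.M n f ≠ X.zero → X.toCDC.deg (X.M n f) = n) ∧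
      (X.M n f = X.zero → X.toCDC.deg (X.M n f) = 0) := by
  have hP := QCDC.taylor_main X f n 0
  rw [Nat.zero_add] at hP
  rw [QCDC.invFact_zero, X.toCDC.one_smul] at hP
  have hA : X.toCDC.pd (n+1) (X.M n f) = X.zero := by
    rw [CDC.pd_succ, hP, CDC.step_lin _ _ (CDC.lin_V n n), CDC.pad_V_diag n,
      X.toCDC.comp_zero, X.toCDC.dir_zero]
  have hB : X.M n (X.M n f) = X.M n f := by
    show X.smul (X.invFact n)
        (X.toCDC.comp (X.toCDC.diag A n) (X.toCDC.pd n (X.M n f))) = _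
    rw [hP, ← X.toCDC.assoc, CDC.diag_V_diag n]
    rfl
  refine ⟨⟨n, hA⟩, ?_, ?_⟩
  · intro hne
    have hmem : n ∈ {q : ℕ | X.toCDC.pd (q+1) (X.M n f) = X.zero} := hA
    have hlow : ∀ q ∈ {q : ℕ | X.toCDC.pd (q+1) (X.M n f) = X.zero}, ¬ q < n := by
      intro q hq hlt
      have hz : X.toCDC.pd n (X.M n f) = X.zero := by
        have h' := CDC.pd_zero_add (n - (q+1)) hq
        rwa [show q+1+(n-(q+1)) = n by omega] at h'
      apply hne
      rw [← hB]
      show X.smul (X.invFact n)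
          (X.toCDC.comp (X.toCDC.diag A n) (X.toCDC.pd n (X.M n f))) = _
      rw [hz, X.toCDC.comp_zero, X.toCDC.smul_zero]
    show sInf {q : ℕ | X.toCDC.pd (q+1) (X.M n f) = X.zero} = n
    refine le_antisymm (Nat.sInf_le hmem) ?_
    by_contra hc
    push_neg at hc
    exact hlow _ (Nat.sInf_mem ⟨n, hmem⟩) hc
  · intro h0
    have h0m : (0:ℕ) ∈ {q : ℕ | X.toCDC.pd (q+1) (X.M n f) = X.zero} := by
      show X.toCDC.pd (0+1) (X.M n f) = X.zero
      rw [CDC.pd_succ, h0, show X.toCDC.pd 0 (X.zero : X.Hom A B) = X.zero from rfl,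
        X.toCDC.D_zero, X.toCDC.comp_zero]
    exact Nat.le_zero.mp (Nat.sInf_le h0m)
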